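/- Let n ≥ 1 and let H_n be the group presented by generators e₁, e₂ and relations [e₁,e₂]e₁ = e₁[e₁,e₂], [e₁,e₂]e₂ = e₂[e₁,e₂], e₁^n = 1, e₂^n = 1, where [e₁,e₂] = e₁e₂e₁^{−1}e₂^{−1}. Then H_n is a finite group of order n³. -/

import Mathlib

/-- The first generator `e₁` of the free group on two generators. -/
def e₁ : FreeGroup (Fin 2) := FreeGroup.of 0

/-- The second generator `e₂` of the free group on two generators. -/
def e₂ : FreeGroup (Fin 2) := FreeGroup.of 1

/-- The commutator `[e₁,e₂] = e₁e₂e₁⁻¹e₂⁻¹`. -/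
def commE : FreeGroup (Fin 2) := e₁ * e₂ * e₁⁻¹ * e₂⁻¹

/-- The relators of the Heisenberg group
`H_n = ⟨e₁, e₂ | [e₁,e₂]e₁ = e₁[e₁,e₂], [e₁,e₂]e₂ = e₂[e₁,e₂], e₁ⁿ = e₂ⁿ = 1⟩`. -/
def heisenbergRels (n : ℕ) : Set (FreeGroup (Fin 2)) :=
  {commE * e₁ * (e₁ * commE)⁻¹, commE * e₂ * (e₂ * commE)⁻¹, e₁ ^ n, e₂ ^ n}

/-!
The commutator `z = [e₁, e₂]` is central, so `(a, b, c) ↦ e₂ᵇ e₁ᵃ zᶜ` is a homomorphism onto `H_n`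
from the integral Heisenberg group of unitriangular matrices; since `e₁ⁿ = e₂ⁿ = 1` and
`zⁿ = [e₁ⁿ, e₂] = 1`, it factors through reduction mod `n`. Conversely, `e₁, e₂` map to the two
elementary matrices over `ZMod n`, and the composite is reduction mod `n`. Hence `H_n` is isomorphic
to the Heisenberg group over `ZMod n`, which has `n³` elements.
-/

open scoped commutatorElement

section CentralCommutator

variable {G : Type*} [Group G] {x y : G}

theorem commutatorElement_zpow_right_of_commute (hy : Commute ⁅x, y⁆ y) (k : ℤ) :
    ⁅x, y ^ k⁆ = ⁅x, y⁆ ^ k := by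
  have hconj : x * y * x⁻¹ = ⁅x, y⁆ * y := by rw [commutatorElement_def]; group
  rw [commutatorElement_def, ← conj_zpow, hconj, hy.mul_zpow, mul_inv_cancel_right]

theorem commutatorElement_zpow_zpow_of_commute (hx : Commute ⁅x, y⁆ x) (hy : Commute ⁅x, y⁆ y)
    (i j : ℤ) : ⁅x ^ i, y ^ j⁆ = ⁅x, y⁆ ^ (i * j) := by
  have hyx : ⁅y ^ j, x⁆ = (⁅x, y⁆ ^ j)⁻¹ := by
    rw [← commutatorElement_zpow_right_of_commute hy, commutatorElement_inv]
  have hyx_comm : Commute ⁅y ^ j, x⁆ x := hyx ▸ (hx.zpow_left j).inv_left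
  rw [← commutatorElement_inv, commutatorElement_zpow_right_of_commute hyx_comm, hyx,
    inv_zpow', ← zpow_neg, neg_neg, ← zpow_mul, mul_comm]

theorem zpow_mul_zpow_of_commute_commutatorElement (hx : Commute ⁅x, y⁆ x)
    (hy : Commute ⁅x, y⁆ y) (i j : ℤ) : x ^ i * y ^ j = y ^ j * x ^ i * ⁅x, y⁆ ^ (i * j) := by
  have hcomm : Commute (⁅x, y⁆ ^ (i * j)) (y ^ j * x ^ i) :=
    (hy.zpow_zpow _ _).mul_right (hx.zpow_zpow _ _)
  rw [← hcomm.eq, ← commutatorElement_zpow_zpow_of_commute hx hy, commutatorElement_def]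
  group

end CentralCommutator

theorem MonoidHom.bijective_of_surjective_of_comp {A B C : Type*} [Group A] [Group B] [Group C]
    {ψ : A →* B} {φ : B →* C} (hψ : Function.Surjective ψ)
    (hφψ : Function.Surjective (φ.comp ψ)) (hker : (φ.comp ψ).ker ≤ ψ.ker) :
    Function.Bijective φ := by
  refine ⟨(injective_iff_map_eq_one φ).2 fun b hb => ?_, .of_comp hφψ⟩
  obtain ⟨a, rfl⟩ := hψ b
  exact hker hb

/-- `⟨a, b, c⟩` stands for the matrix `!![1, a, c; 0, 1, b; 0, 0, 1]`. -/
@[ext]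
structure Heisenberg (R : Type*) where
  a : R
  b : R
  c : R

namespace Heisenberg

def equivProd {R : Type*} : Heisenberg R ≃ R × R × R where
  toFun p := (p.a, p.b, p.c)
  invFun t := ⟨t.1, t.2.1, t.2.2⟩

lemma card (R : Type*) : Nat.card (Heisenberg R) = Nat.card R ^ 3 := by
  rw [Nat.card_congr equivProd, Nat.card_prod, Nat.card_prod]
  ring

section Ring

variable {R : Type*} [CommRing R]

instance : Mul (Heisenberg R) := ⟨fun p q => ⟨p.a + q.a, p.b + q.b, p.c + q.c + p.a * q.b⟩⟩

instance : One (Heisenberg R) := ⟨⟨0, 0, 0⟩⟩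

instance : Inv (Heisenberg R) := ⟨fun p => ⟨-p.a, -p.b, p.a * p.b - p.c⟩⟩

@[simp] lemma mul_def (p q : Heisenberg R) :
    p * q = ⟨p.a + q.a, p.b + q.b, p.c + q.c + p.a * q.b⟩ := rfl

@[simp] lemma one_def : (1 : Heisenberg R) = ⟨0, 0, 0⟩ := rfl

@[simp] lemma inv_def (p : Heisenberg R) : p⁻¹ = ⟨-p.a, -p.b, p.a * p.b - p.c⟩ := rfl

instance : Group (Heisenberg R) where
  mul_assoc p q r := by ext <;> simp <;> ring
  one_mul p := by ext <;> simp
  mul_one p := by ext <;> simp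
  inv_mul_cancel p := by ext <;> simp

def x : Heisenberg R := ⟨1, 0, 0⟩

def y : Heisenberg R := ⟨0, 1, 0⟩

def z : Heisenberg R := ⟨0, 0, 1⟩

lemma commutatorElement_x_y : ⁅(x : Heisenberg R), (y : Heisenberg R)⁆ = z := by
  ext <;> simp [commutatorElement_def, x, y, z]

lemma commute_commutatorElement_x_y (p : Heisenberg R) :
    Commute ⁅(x : Heisenberg R), (y : Heisenberg R)⁆ p := by
  rw [commutatorElement_x_y]
  ext <;> simp [z, add_comm]

lemma x_zpow (k : ℤ) : (x : Heisenberg R) ^ k = ⟨k, 0, 0⟩ := by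
  induction k using Int.induction_on with
  | zero => simp
  | succ k ih => rw [zpow_add_one, ih]; ext <;> simp [x]
  | pred k ih => rw [zpow_sub_one, ih]; ext <;> simp [x]; ring

lemma y_zpow (k : ℤ) : (y : Heisenberg R) ^ k = ⟨0, k, 0⟩ := by
  induction k using Int.induction_on with
  | zero => simp
  | succ k ih => rw [zpow_add_one, ih]; ext <;> simp [y]
  | pred k ih => rw [zpow_sub_one, ih]; ext <;> simp [y]; ring

lemma z_zpow (k : ℤ) : (z : Heisenberg R) ^ k = ⟨0, 0, k⟩ := by
  induction k using Int.induction_on with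
  | zero => simp
  | succ k ih => rw [zpow_add_one, ih]; ext <;> simp [z]
  | pred k ih => rw [zpow_sub_one, ih]; ext <;> simp [z]; ring

lemma x_pow_char (n : ℕ) [CharP R n] : (x : Heisenberg R) ^ n = 1 := by
  rw [← zpow_natCast, x_zpow]
  ext <;> simp

lemma y_pow_char (n : ℕ) [CharP R n] : (y : Heisenberg R) ^ n = 1 := by
  rw [← zpow_natCast, y_zpow]
  ext <;> simp

@[simps]
def map {S : Type*} [CommRing S] (f : R →+* S) : Heisenberg R →* Heisenberg S where
  toFun p := ⟨f p.a, f p.b, f p.c⟩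
  map_one' := by ext <;> simp
  map_mul' p q := by ext <;> simp

@[simp] lemma map_x {S : Type*} [CommRing S] (f : R →+* S) : map f x = x := by
  ext <;> simp [x]

@[simp] lemma map_y {S : Type*} [CommRing S] (f : R →+* S) : map f y = y := by
  ext <;> simp [y]

lemma map_surjective {S : Type*} [CommRing S] {f : R →+* S} (hf : Function.Surjective f) :
    Function.Surjective (map f) := by
  intro q
  obtain ⟨a, ha⟩ := hf q.a
  obtain ⟨b, hb⟩ := hf q.b
  obtain ⟨c, hc⟩ := hf q.c
  exact ⟨⟨a, b, c⟩, by ext <;> simp [ha, hb, hc]⟩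

end Ring

lemma eq_y_zpow_mul_x_zpow_mul_z_zpow (p : Heisenberg ℤ) : p = y ^ p.b * x ^ p.a * z ^ p.c := by
  rw [x_zpow, y_zpow, z_zpow]
  ext <;> simp

variable {G : Type*} [Group G]

lemma hom_ext {f g : Heisenberg ℤ →* G} (hx : f x = g x) (hy : f y = g y) : f = g := by
  ext p
  rw [eq_y_zpow_mul_x_zpow_mul_z_zpow p, ← commutatorElement_x_y]
  simp only [map_mul, map_zpow, map_commutatorElement, hx, hy]

def lift (u v : G) (hu : Commute ⁅u, v⁆ u) (hv : Commute ⁅u, v⁆ v) : Heisenberg ℤ →* G where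
  toFun p := v ^ p.b * u ^ p.a * ⁅u, v⁆ ^ p.c
  map_one' := by simp
  map_mul' p q := by
    have hswap := zpow_mul_zpow_of_commute_commutatorElement hu hv p.a q.b
    have hc : Commute (⁅u, v⁆ ^ p.c) (v ^ q.b * u ^ q.a) :=
      (hv.zpow_zpow _ _).mul_right (hu.zpow_zpow _ _)
    have hab : Commute (⁅u, v⁆ ^ (p.a * q.b)) (u ^ q.a) := hu.zpow_zpow _ _
    calc v ^ (p.b + q.b) * u ^ (p.a + q.a) * ⁅u, v⁆ ^ (p.c + q.c + p.a * q.b)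
        = v ^ p.b * (v ^ q.b * u ^ p.a * ⁅u, v⁆ ^ (p.a * q.b)) * u ^ q.a *
            (⁅u, v⁆ ^ p.c * ⁅u, v⁆ ^ q.c) := by
          simp only [zpow_add, mul_assoc, hab.eq]
          group
      _ = v ^ p.b * u ^ p.a * (⁅u, v⁆ ^ p.c * (v ^ q.b * u ^ q.a)) * ⁅u, v⁆ ^ q.c := by
          rw [← hswap, hc.eq]; group
      _ = v ^ p.b * u ^ p.a * ⁅u, v⁆ ^ p.c * (v ^ q.b * u ^ q.a * ⁅u, v⁆ ^ q.c) := by group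

variable {u v : G} {hu : Commute ⁅u, v⁆ u} {hv : Commute ⁅u, v⁆ v}

@[simp] lemma lift_x : lift u v hu hv x = u := by simp [lift, x]

@[simp] lemma lift_y : lift u v hu hv y = v := by simp [lift, y]

lemma lift_surjective (hgen : Subgroup.closure {u, v} = ⊤) :
    Function.Surjective (lift u v hu hv) := by
  rw [← MonoidHom.range_eq_top, eq_top_iff, ← hgen, Subgroup.closure_le, Set.insert_subset_iff,
    Set.singleton_subset_iff]
  exact ⟨⟨x, lift_x⟩, ⟨y, lift_y⟩⟩

lemma ker_map_intCast_le_ker_lift {n : ℕ} (hun : u ^ n = 1) (hvn : v ^ n = 1) :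
    (map (Int.castRingHom (ZMod n))).ker ≤ (lift u v hu hv).ker := by
  have zpow_eq_one {g : G} (hg : g ^ n = 1) {k : ℤ} (hk : (k : ZMod n) = 0) : g ^ k = 1 :=
    orderOf_dvd_iff_zpow_eq_one.1 <|
      (Int.natCast_dvd_natCast.2 (orderOf_dvd_of_pow_eq_one hg)).trans
        ((ZMod.intCast_zmod_eq_zero_iff_dvd k n).1 hk)
  have hwn : ⁅u, v⁆ ^ n = 1 := by
    rw [← zpow_natCast, ← mul_one (n : ℤ), ← commutatorElement_zpow_zpow_of_commute hu hv,
      zpow_natCast, hun, commutatorElement_one_left]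
  intro p hp
  simp only [MonoidHom.mem_ker, one_def, Heisenberg.ext_iff, map_apply_a, eq_intCast, map_apply_b,
    map_apply_c] at hp
  simp only [MonoidHom.mem_ker, lift, MonoidHom.coe_mk, OneHom.coe_mk, zpow_eq_one hvn hp.2.1,
    zpow_eq_one hun hp.1, zpow_eq_one hwn hp.2.2, mul_one]

end Heisenberg

lemma forall_mem_heisenbergRels_lift_eq_one_iff {G : Type*} [Group G] {n : ℕ} (f : Fin 2 → G) :
    (∀ r ∈ heisenbergRels n, FreeGroup.lift f r = 1) ↔
      Commute ⁅f 0, f 1⁆ (f 0) ∧ Commute ⁅f 0, f 1⁆ (f 1) ∧ f 0 ^ n = 1 ∧ f 1 ^ n = 1 := by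
  have hcomm : FreeGroup.lift f commE = ⁅f 0, f 1⁆ := by
    simp [commE, e₁, e₂, commutatorElement_def]
  simp only [heisenbergRels, Set.mem_insert_iff, Set.mem_singleton_iff, forall_eq_or_imp,
    forall_eq, map_mul, map_inv, map_pow, hcomm, mul_inv_eq_one, e₁, e₂, FreeGroup.lift_apply_of]
  rfl

lemma PresentedGroup.closure_of_zero_of_one {rels : Set (FreeGroup (Fin 2))} :
    Subgroup.closure {(of 0 : PresentedGroup rels), of 1} = ⊤ := by
  rw [← closure_range_of]
  congr
  ext
  simp [Fin.exists_fin_two, eq_comm]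

theorem heisenberg_card_general (n : ℕ) :
    Nat.card (PresentedGroup (heisenbergRels n)) = n ^ 3 := by
  have hmk : FreeGroup.lift PresentedGroup.of = PresentedGroup.mk (heisenbergRels n) :=
    FreeGroup.ext_hom _ _ fun _ => by simp [PresentedGroup.of]
  obtain ⟨hX, hY, hXn, hYn⟩ := (forall_mem_heisenbergRels_lift_eq_one_iff PresentedGroup.of).1
    fun r hr => by rw [hmk]; exact PresentedGroup.one_of_mem hr
  have hrels := (forall_mem_heisenbergRels_lift_eq_one_iff (n := n)
    ![(Heisenberg.x : Heisenberg (ZMod n)), Heisenberg.y]).2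
    ⟨Heisenberg.commute_commutatorElement_x_y _, Heisenberg.commute_commutatorElement_x_y _,
      Heisenberg.x_pow_char n, Heisenberg.y_pow_char n⟩
  let φ := PresentedGroup.toGroup hrels
  let ψ := Heisenberg.lift _ _ hX hY
  have hcomp : φ.comp ψ = Heisenberg.map (Int.castRingHom (ZMod n)) :=
    Heisenberg.hom_ext (by simp [φ, ψ]) (by simp [φ, ψ])
  have hφ : Function.Bijective φ := MonoidHom.bijective_of_surjective_of_comp
    (Heisenberg.lift_surjective PresentedGroup.closure_of_zero_of_one)
    (hcomp ▸ Heisenberg.map_surjective ZMod.intCast_surjective)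
    (hcomp ▸ Heisenberg.ker_map_intCast_le_ker_lift hXn hYn)
  rw [Nat.card_congr (Equiv.ofBijective φ hφ), Heisenberg.card, Nat.card_zmod]

/-- the Heisenberg group `H_n` is a finite group of order `n³`. -/
theorem heisenberg_card (n : ℕ) (hn : 1 ≤ n) :
    Nat.card (PresentedGroup (heisenbergRels n)) = n ^ 3 :=
  heisenberg_card_general n
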